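/- The sequence u_n = 1/2 + 2^{-(n+1)}·C(n, ⌊n/2⌋) satisfies u_{n+2} ≤ u_n for all n ≥ 0 (monotone decreasing along both even and odd indices), and hence for n ≥ 1 the maximum value is u_1 = 3/4. -/
import Mathlib

lemma cb_step (k : ℕ) : Nat.centralBinom (k + 1) ≤ 4 * Nat.centralBinom k := by
  have h := Nat.succ_mul_centralBinom_succ k
  have hpos : 0 < k + 1 := Nat.succ_pos k
  have h2 : (k + 1) * Nat.centralBinom (k + 1) ≤ (k + 1) * (4 * Nat.centralBinom k) := by
    rw [h]; nlinarith [Nat.centralBinom_pos k]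
  exact Nat.le_of_mul_le_mul_left h2 hpos

lemma double_choose (m : ℕ) : (2 * m + 2).choose (m + 1) = 2 * ((2 * m + 1).choose m) := by
  have hs : (2 * m + 1).choose (m + 1) = (2 * m + 1).choose m := by
    have h : m + 1 ≤ 2 * m + 1 := by omega
    have := Nat.choose_symm h
    have he : 2 * m + 1 - (m + 1) = m := by omega
    rw [he] at this
    omega
  have h := Nat.choose_succ_succ (2 * m + 1) m
  simp only [Nat.succ_eq_add_one] at h
  ring_nf at h hs ⊢
  omega

lemma key (n : ℕ) : (n + 2).choose ((n + 2) / 2) ≤ 4 * n.choose (n / 2) := by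
  rcases Nat.even_or_odd n with ⟨m, hm⟩ | ⟨m, hm⟩
  · subst hm
    have h1 : (m + m + 2) / 2 = m + 1 := by omega
    have h2 : (m + m) / 2 = m := by omega
    rw [h1, h2]
    have c := cb_step m
    unfold Nat.centralBinom at c
    ring_nf at c ⊢
    omega
  · subst hm
    have h1 : (2 * m + 1 + 2) / 2 = m + 1 := by omega
    have h2 : (2 * m + 1) / 2 = m := by omega
    rw [h1, h2]
    have d1 := double_choose m
    have d2 := double_choose (m + 1)
    have c1 := cb_step (m + 1)
    unfold Nat.centralBinom at c1
    ring_nf at d1 d2 c1 ⊢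
    omega

/-- The sequence `u n = 1/2 + 2^{-(n+1)}·C(n,⌊n/2⌋)` satisfies `u (n+2) ≤ u n` for all
`n ≥ 0`, and hence for `n ≥ 1` its maximum value is `u 1 = 3/4`. -/
theorem two_n_unknot_prob_max (u : ℕ → ℝ)
    (hu : ∀ n : ℕ, u n = 1 / 2 + (n.choose (n / 2) : ℝ) / 2 ^ (n + 1)) :
    (∀ n : ℕ, u (n + 2) ≤ u n) ∧ (∀ n : ℕ, 1 ≤ n → u n ≤ u 1) ∧ u 1 = 3 / 4 := by
  have step : ∀ n : ℕ, u (n + 2) ≤ u n := by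
    intro n
    rw [hu, hu]
    have hk : ((n + 2).choose ((n + 2) / 2) : ℝ) ≤ 4 * (n.choose (n / 2) : ℝ) := by
      exact_mod_cast key n
    have hp : (0 : ℝ) < 2 ^ (n + 1) := by positivity
    have : ((n + 2).choose ((n + 2) / 2) : ℝ) / 2 ^ (n + 2 + 1)
        ≤ (n.choose (n / 2) : ℝ) / 2 ^ (n + 1) := by
      rw [div_le_div_iff₀ (by positivity) hp]
      have : (2 : ℝ) ^ (n + 2 + 1) = 4 * 2 ^ (n + 1) := by ring
      rw [this]
      nlinarith [hp, hk]
    linarith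
  have h1 : u 1 = 3 / 4 := by rw [hu]; norm_num
  refine ⟨step, ?_, h1⟩
  intro n hn
  induction n using Nat.strong_induction_on with
  | _ n ih =>
    match n, hn with
    | 1, _ => exact le_refl _
    | 2, _ =>
      rw [hu 2, h1]; norm_num
    | (k + 3), _ =>
      calc u (k + 3) ≤ u (k + 1) := step (k + 1)
        _ ≤ u 1 := ih (k + 1) (by omega) (by omega)
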